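/- arXiv:1903.00881 — 4 statements merged into one kernel-verified Lean document; each statement's English description precedes it below -/
import Mathlib

section
/- (Laplacian of the P-function) Let N ≥ 2, p > 1, U ⊆ ℝ^N open, u : U → ℝ of class C³, and define P := (2(p−1)/p) |∇u|^p + (2/N) u. Then at every point x ∈ U with ∇u(x) ≠ 0, ΔP(x) = 2 { (p−1) |∇u(x)|^{p−2} [ (p−2) ‖D²u(x) (∇u(x)/|∇u(x)|)‖² + ‖D²u(x)‖² + ⟨∇u(x), ∇(Δu)(x)⟩ ] + Δu(x)/N }, where ‖D²u‖ is the Frobenius norm of the Hessian and ‖D²u e‖ is the Euclidean norm of the vector D²u e. -/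
open Matrix Real

/-- The Hessian matrix of `u` at `x`: entry `(i,j)` is `∂²u/∂xᵢ∂xⱼ`. -/
noncomputable def hess {N : ℕ} (u : EuclideanSpace ℝ (Fin N) → ℝ) (x : EuclideanSpace ℝ (Fin N)) :
    Matrix (Fin N) (Fin N) ℝ :=
  fun i j => gradient (fun y => gradient u y j) x i

/-- The square of the Frobenius norm of a matrix. -/
noncomputable def frobSq {n : ℕ} (A : Matrix (Fin n) (Fin n) ℝ) : ℝ :=
  ∑ i, ∑ j, (A i j)^2

/-!
Write `φ = ‖∇u‖²`, so that `P = (2(p-1)/p) φ^{p/2} + (2/N) u`. Since `∇u(x) ≠ 0`, `t ↦ t^{p/2}` is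
smooth near `φ(x) > 0`, and the chain rule for the Laplacian, `Δ(g ∘ φ) = g''(φ)‖∇φ‖² + g'(φ) Δφ`,
reduces the claim to the two identities `∇φ = 2 D²u ∇u` and `Δφ = 2‖D²u‖² + 2⟨∇u, ∇Δu⟩`; the
second uses the symmetry of third derivatives of the `C³` function `u` to write `Δ(∂ₖu) = ∂ₖ(Δu)`.
-/

open Filter Topology

section DirDeriv

variable {E : Type*} [NormedAddCommGroup E] [NormedSpace ℝ E]

/-- Unlike `lineDeriv`, this is defined through `fderiv`, so that
`gradient f x i = dirDeriv (EuclideanSpace.single i 1) f x` holds without differentiability. -/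
noncomputable def dirDeriv (v : E) (f : E → ℝ) : E → ℝ := fun x => fderiv ℝ f x v

variable {v w : E} {f g : E → ℝ} {x : E}

theorem ContDiffAt.dirDeriv {n m : WithTop ℕ∞} (hf : ContDiffAt ℝ n f x) (hmn : m + 1 ≤ n) :
    ContDiffAt ℝ m (_root_.dirDeriv v f) x :=
  (hf.fderiv_right hmn).clm_apply contDiffAt_const

theorem ContDiffAt.differentiableAt_dirDeriv (hf : ContDiffAt ℝ 2 f x) :
    DifferentiableAt ℝ (_root_.dirDeriv v f) x :=
  (hf.dirDeriv (m := 1) (by norm_num)).differentiableAt one_ne_zero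

theorem Filter.EventuallyEq.dirDeriv_eq (h : f =ᶠ[𝓝 x] g) : dirDeriv v f x = dirDeriv v g x := by
  simp only [_root_.dirDeriv, h.fderiv_eq]

theorem dirDeriv_const_mul_add_const_mul (a b : ℝ) (hf : DifferentiableAt ℝ f x)
    (hg : DifferentiableAt ℝ g x) :
    dirDeriv v (fun y => a * f y + b * g y) x = a * dirDeriv v f x + b * dirDeriv v g x := by
  simp [dirDeriv, fderiv_fun_add (hf.const_mul a) (hg.const_mul b), fderiv_const_mul hf,
    fderiv_const_mul hg]

theorem dirDeriv_mul (hf : DifferentiableAt ℝ f x) (hg : DifferentiableAt ℝ g x) :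
    dirDeriv v (fun y => f y * g y) x = dirDeriv v f x * g x + f x * dirDeriv v g x := by
  simp only [dirDeriv, fderiv_fun_mul hf hg, _root_.add_apply, _root_.smul_apply, smul_eq_mul]
  ring

theorem dirDeriv_fun_sum {ι : Type*} {s : Finset ι} {f : ι → E → ℝ}
    (hf : ∀ k ∈ s, DifferentiableAt ℝ (f k) x) :
    dirDeriv v (fun y => ∑ k ∈ s, f k y) x = ∑ k ∈ s, dirDeriv v (f k) x := by
  simp [dirDeriv, fderiv_fun_sum hf]

theorem dirDeriv_comp {g : ℝ → ℝ} {φ : E → ℝ} (hg : DifferentiableAt ℝ g (φ x))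
    (hφ : DifferentiableAt ℝ φ x) :
    dirDeriv v (fun y => g (φ y)) x = deriv g (φ x) * dirDeriv v φ x := by
  simp only [dirDeriv, fderiv_fun_comp x hg hφ, ContinuousLinearMap.comp_apply,
    fderiv_eq_smul_deriv, smul_eq_mul]
  ring

theorem ContDiffAt.eventually_differentiableAt {n : WithTop ℕ∞} (hf : ContDiffAt ℝ n f x)
    (hn : 1 ≤ n) : ∀ᶠ y in 𝓝 x, DifferentiableAt ℝ f y := by
  have h1 : ContDiffAt ℝ 1 f x := hf.of_le hn
  filter_upwards [h1.eventually (by simp)] with y hy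
  exact hy.differentiableAt one_ne_zero

theorem dirDeriv_dirDeriv_const_mul_add_const_mul (a b : ℝ) (hf : ContDiffAt ℝ 2 f x)
    (hg : ContDiffAt ℝ 2 g x) :
    dirDeriv w (dirDeriv v (fun y => a * f y + b * g y)) x =
      a * dirDeriv w (dirDeriv v f) x + b * dirDeriv w (dirDeriv v g) x := by
  have h : dirDeriv v (fun y => a * f y + b * g y) =ᶠ[𝓝 x]
      fun y => a * dirDeriv v f y + b * dirDeriv v g y := by
    filter_upwards [hf.eventually_differentiableAt one_le_two,
      hg.eventually_differentiableAt one_le_two] with y hfy hgy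
    exact dirDeriv_const_mul_add_const_mul a b hfy hgy
  rw [h.dirDeriv_eq, dirDeriv_const_mul_add_const_mul a b hf.differentiableAt_dirDeriv
    hg.differentiableAt_dirDeriv]

theorem dirDeriv_dirDeriv_fun_sum {ι : Type*} {s : Finset ι} {f : ι → E → ℝ}
    (hf : ∀ k ∈ s, ContDiffAt ℝ 2 (f k) x) :
    dirDeriv w (dirDeriv v (fun y => ∑ k ∈ s, f k y)) x =
      ∑ k ∈ s, dirDeriv w (dirDeriv v (f k)) x := by
  have h : dirDeriv v (fun y => ∑ k ∈ s, f k y) =ᶠ[𝓝 x]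
      fun y => ∑ k ∈ s, dirDeriv v (f k) y := by
    filter_upwards [(s.eventually_all).2 fun k hk => (hf k hk).eventually_differentiableAt
      one_le_two] with y hy
    exact dirDeriv_fun_sum hy
  rw [h.dirDeriv_eq, dirDeriv_fun_sum fun k hk => (hf k hk).differentiableAt_dirDeriv]

theorem dirDeriv_dirDeriv_comp {g : ℝ → ℝ} {φ : E → ℝ} (hg : ContDiffAt ℝ 2 g (φ x))
    (hφ : ContDiffAt ℝ 2 φ x) :
    dirDeriv w (dirDeriv v (fun y => g (φ y))) x =
      deriv (deriv g) (φ x) * dirDeriv w φ x * dirDeriv v φ x +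
        deriv g (φ x) * dirDeriv w (dirDeriv v φ) x := by
  have h : dirDeriv v (fun y => g (φ y)) =ᶠ[𝓝 x] fun y => deriv g (φ y) * dirDeriv v φ y := by
    filter_upwards [hφ.continuousAt.eventually (hg.eventually_differentiableAt one_le_two),
      hφ.eventually_differentiableAt one_le_two] with y hgy hφy
    exact dirDeriv_comp hgy hφy
  have hg' : DifferentiableAt ℝ (deriv g) (φ x) :=
    (hg.derivWithin (m := 1) (by norm_num)).differentiableAt one_ne_zero
  have hφ' : DifferentiableAt ℝ φ x := hφ.differentiableAt two_ne_zero
  rw [h.dirDeriv_eq, dirDeriv_mul (f := fun y => deriv g (φ y)) (hg'.comp x hφ')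
    hφ.differentiableAt_dirDeriv, dirDeriv_comp hg' hφ']

theorem dirDeriv_dirDeriv_comm (hf : ContDiffAt ℝ 2 f x) :
    dirDeriv w (dirDeriv v f) x = dirDeriv v (dirDeriv w f) x := by
  have hd : DifferentiableAt ℝ (fderiv ℝ f) x :=
    (hf.fderiv_right (m := 1) le_rfl).differentiableAt one_ne_zero
  have key (a b : E) : dirDeriv a (dirDeriv b f) x = fderiv ℝ (fderiv ℝ f) x a b := by
    change fderiv ℝ (fun y => fderiv ℝ f y b) x a = _
    rw [fderiv_clm_apply hd (differentiableAt_const b)]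
    simp
  rw [key, key]
  exact hf.isSymmSndFDerivAt (by simp) w v

theorem dirDeriv_dirDeriv_dirDeriv_comm {a : E} (hf : ContDiffAt ℝ 3 f x) :
    dirDeriv a (dirDeriv w (dirDeriv v f)) x = dirDeriv v (dirDeriv a (dirDeriv w f)) x := by
  have h : dirDeriv w (dirDeriv v f) =ᶠ[𝓝 x] dirDeriv v (dirDeriv w f) := by
    filter_upwards [(hf.of_le (by norm_num : (2 : WithTop ℕ∞) ≤ 3)).eventually (by simp)]
      with y hy
    exact dirDeriv_dirDeriv_comm hy
  rw [h.dirDeriv_eq]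
  exact dirDeriv_dirDeriv_comm (hf.dirDeriv (by norm_num))

theorem dirDeriv_dirDeriv_sq (hf : ContDiffAt ℝ 2 f x) :
    dirDeriv w (dirDeriv v (fun y => f y ^ 2)) x =
      2 * dirDeriv w f x * dirDeriv v f x + 2 * f x * dirDeriv w (dirDeriv v f) x := by
  have h := dirDeriv_dirDeriv_comp (g := fun t : ℝ => t ^ 2) (w := w) (v := v)
    (contDiff_id.pow 2).contDiffAt hf
  have hd : deriv (fun t : ℝ => t ^ 2) = fun t => 2 * t := by
    funext t; simp
  simpa [hd] using h

end DirDeriv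

theorem sq_rpow_div_two {t : ℝ} (ht : 0 ≤ t) (q : ℝ) : (t ^ 2) ^ (q / 2) = t ^ q := by
  rw [← rpow_natCast, ← rpow_mul ht]
  congr 1
  push_cast
  ring

section Euclidean

variable {N : ℕ} {f g u : EuclideanSpace ℝ (Fin N) → ℝ} {x : EuclideanSpace ℝ (Fin N)}

local notation "∂[" i "]" => dirDeriv (EuclideanSpace.single i (1 : ℝ))

theorem gradient_apply_eq_dirDeriv (f : EuclideanSpace ℝ (Fin N) → ℝ)
    (x : EuclideanSpace ℝ (Fin N)) (i : Fin N) : gradient f x i = ∂[i] f x := by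
  rw [dirDeriv, ← inner_gradient_left, EuclideanSpace.inner_single_right]
  simp

theorem hess_apply (f : EuclideanSpace ℝ (Fin N) → ℝ) (x : EuclideanSpace ℝ (Fin N))
    (i j : Fin N) : hess f x i j = ∂[i] (∂[j] f) x := by
  simp only [hess, gradient_apply_eq_dirDeriv]

theorem trace_hess (f : EuclideanSpace ℝ (Fin N) → ℝ) (x : EuclideanSpace ℝ (Fin N)) :
    (hess f x).trace = ∑ i, ∂[i] (∂[i] f) x := by
  simp [Matrix.trace, hess_apply]

theorem norm_gradient_sq (f : EuclideanSpace ℝ (Fin N) → ℝ) (x : EuclideanSpace ℝ (Fin N)) :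
    ‖gradient f x‖ ^ 2 = ∑ k, (∂[k] f x) ^ 2 := by
  simp [EuclideanSpace.real_norm_sq_eq, gradient_apply_eq_dirDeriv]

theorem ContDiffAt.norm_gradient_sq {n : WithTop ℕ∞} (hu : ContDiffAt ℝ (n + 1) u x) :
    ContDiffAt ℝ n (fun y => ‖gradient u y‖ ^ 2) x := by
  simp only [_root_.norm_gradient_sq]
  exact ContDiffAt.sum fun k _ => (hu.dirDeriv le_rfl).pow 2

theorem trace_hess_const_mul_add_const_mul (a b : ℝ) (hf : ContDiffAt ℝ 2 f x)
    (hg : ContDiffAt ℝ 2 g x) :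
    (hess (fun y => a * f y + b * g y) x).trace = a * (hess f x).trace + b * (hess g x).trace := by
  simp only [trace_hess, dirDeriv_dirDeriv_const_mul_add_const_mul a b hf hg,
    Finset.sum_add_distrib, Finset.mul_sum]

theorem trace_hess_comp {g : ℝ → ℝ} {φ : EuclideanSpace ℝ (Fin N) → ℝ}
    (hg : ContDiffAt ℝ 2 g (φ x)) (hφ : ContDiffAt ℝ 2 φ x) :
    (hess (fun y => g (φ y)) x).trace =
      deriv (deriv g) (φ x) * ‖gradient φ x‖ ^ 2 + deriv g (φ x) * (hess φ x).trace := by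
  simp only [trace_hess, norm_gradient_sq, dirDeriv_dirDeriv_comp hg hφ, Finset.sum_add_distrib,
    Finset.mul_sum]
  congr 1
  exact Finset.sum_congr rfl fun i _ => by ring

theorem gradient_norm_gradient_sq_apply (hu : ContDiffAt ℝ 2 u x) (i : Fin N) :
    gradient (fun y => ‖gradient u y‖ ^ 2) x i =
      2 * (hess u x *ᵥ fun j => gradient u x j) i := by
  have hsq (k : Fin N) : ∂[i] (fun y => ∂[k] u y ^ 2) x = 2 * ∂[k] u x * ∂[i] (∂[k] u) x := by
    simpa using dirDeriv_comp (g := fun t : ℝ => t ^ 2) (v := EuclideanSpace.single i 1)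
      (differentiableAt_pow 2) (hu.differentiableAt_dirDeriv (v := EuclideanSpace.single k 1))
  simp only [gradient_apply_eq_dirDeriv, norm_gradient_sq, mulVec, dotProduct, hess_apply]
  rw [dirDeriv_fun_sum (f := fun k y => ∂[k] u y ^ 2) fun k _ =>
    (differentiableAt_pow 2).comp x hu.differentiableAt_dirDeriv,
    Finset.mul_sum]
  exact Finset.sum_congr rfl fun k _ => by rw [hsq]; ring

theorem norm_gradient_norm_gradient_sq (hu : ContDiffAt ℝ 2 u x) :
    ‖gradient (fun y => ‖gradient u y‖ ^ 2) x‖ ^ 2 =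
      4 * ∑ i, (hess u x *ᵥ fun j => gradient u x j) i ^ 2 := by
  rw [EuclideanSpace.real_norm_sq_eq, Finset.mul_sum]
  simp only [gradient_norm_gradient_sq_apply hu]
  exact Finset.sum_congr rfl fun i _ => by ring

theorem gradient_trace_hess_apply (hu : ContDiffAt ℝ 3 u x) (k : Fin N) :
    gradient (fun y => (hess u y).trace) x k = ∑ i, ∂[i] (∂[i] (∂[k] u)) x := by
  simp only [gradient_apply_eq_dirDeriv, trace_hess]
  rw [dirDeriv_fun_sum fun i _ =>
    (hu.dirDeriv (m := 2) (by norm_num)).differentiableAt_dirDeriv]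
  exact Finset.sum_congr rfl fun i _ => (dirDeriv_dirDeriv_dirDeriv_comm hu).symm

theorem trace_hess_norm_gradient_sq (hu : ContDiffAt ℝ 3 u x) :
    (hess (fun y => ‖gradient u y‖ ^ 2) x).trace =
      2 * frobSq (hess u x) +
        2 * ((fun i => gradient u x i) ⬝ᵥ fun i => gradient (fun y => (hess u y).trace) x i) := by
  have hu' (k : Fin N) : ContDiffAt ℝ 2 (∂[k] u) x := hu.dirDeriv (by norm_num)
  simp only [dotProduct, gradient_trace_hess_apply hu]
  simp only [trace_hess, norm_gradient_sq]
  rw [Finset.sum_congr rfl fun i _ =>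
    dirDeriv_dirDeriv_fun_sum (f := fun k y => ∂[k] u y ^ 2) fun k _ => (hu' k).pow 2]
  simp only [dirDeriv_dirDeriv_sq, hu', frobSq, hess_apply, gradient_apply_eq_dirDeriv,
    Finset.mul_sum, Finset.sum_add_distrib]
  congr 1
  · exact Finset.sum_congr rfl fun i _ => Finset.sum_congr rfl fun k _ => by ring
  · rw [Finset.sum_comm]
    exact Finset.sum_congr rfl fun k _ => Finset.sum_congr rfl fun i _ => by ring

end Euclidean

theorem laplacian_P_function_general (N : ℕ) (p : ℝ) (hp : 1 < p)
    (U : Set (EuclideanSpace ℝ (Fin N))) (hU : IsOpen U)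
    (u : EuclideanSpace ℝ (Fin N) → ℝ) (hu : ContDiffOn ℝ 3 u U)
    (P : EuclideanSpace ℝ (Fin N) → ℝ)
    (hP : ∀ y, P y = (2 * (p - 1) / p) * ‖gradient u y‖ ^ p + (2 / (N : ℝ)) * u y)
    (x : EuclideanSpace ℝ (Fin N)) (hx : x ∈ U) (hg : gradient u x ≠ 0) :
    (hess P x).trace =
      2 * ((p - 1) * ‖gradient u x‖ ^ (p - 2) *
            ((p - 2) *
                (∑ i, ((hess u x).mulVec (fun j => gradient u x j / ‖gradient u x‖) i) ^ 2) +
              frobSq (hess u x) +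
              (fun i => gradient u x i) ⬝ᵥ
                (fun i => gradient (fun y => (hess u y).trace) x i)) +
          (hess u x).trace / (N : ℝ)) := by
  have hu3 : ContDiffAt ℝ 3 u x := hu.contDiffAt (hU.mem_nhds hx)
  have hu2 : ContDiffAt ℝ 2 u x := hu3.of_le (by norm_num)
  have hφ : ContDiffAt ℝ 2 (fun y => ‖gradient u y‖ ^ 2) x := hu3.norm_gradient_sq
  have hgx : 0 < ‖gradient u x‖ := norm_pos_iff.2 hg
  have hpow : ContDiffAt ℝ 2 (fun t => t ^ (p / 2)) (‖gradient u x‖ ^ 2) :=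
    contDiffAt_rpow_const_of_ne (by positivity)
  have hPφ : P = fun y => 2 * (p - 1) / p * (‖gradient u y‖ ^ 2) ^ (p / 2) + 2 / N * u y := by
    funext y
    rw [hP, sq_rpow_div_two (norm_nonneg _)]
  have hF : ContDiffAt ℝ 2 (fun y => (‖gradient u y‖ ^ 2) ^ (p / 2)) x :=
    ContDiffAt.comp (g := fun t : ℝ => t ^ (p / 2)) x hpow hφ
  rw [hPφ, trace_hess_const_mul_add_const_mul _ _ hF hu2, trace_hess_comp hpow hφ,
    trace_hess_norm_gradient_sq hu3]
  have hmv : (hess u x *ᵥ fun j => gradient u x j / ‖gradient u x‖) =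
      ‖gradient u x‖⁻¹ • (hess u x *ᵥ fun j => gradient u x j) := by
    rw [← mulVec_smul]
    congr 1
    funext j
    simp [div_eq_inv_mul]
  have hrpow : (‖gradient u x‖ ^ 2) ^ (p / 2 - 1) = ‖gradient u x‖ ^ (p - 2) := by
    rw [show p / 2 - 1 = (p - 2) / 2 by ring, sq_rpow_div_two (norm_nonneg _)]
  rw [norm_gradient_norm_gradient_sq hu2, hmv]
  simp only [Real.deriv_rpow_const', deriv_const_mul_field']
  rw [rpow_sub_one (by positivity), hrpow]
  simp only [Pi.smul_apply, smul_eq_mul, mul_pow, ← Finset.mul_sum]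
  have hp0 : p ≠ 0 := by linarith
  field_simp
  ring

/-- **Laplacian of the `P`-function** (formula (2.10) of the paper). For a `C³` function `u` and
`P = (2(p-1)/p)|∇u|^p + (2/N)u`, at every non-critical point,
`ΔP = 2 {(p-1)|∇u|^{p-2} [(p-2)‖D²u (∇u/|∇u|)‖² + ‖D²u‖² + ⟨∇u, ∇Δu⟩] + Δu/N}`. -/
theorem laplacian_P_function (N : ℕ) (hN : 2 ≤ N) (p : ℝ) (hp : 1 < p)
    (U : Set (EuclideanSpace ℝ (Fin N))) (hU : IsOpen U)
    (u : EuclideanSpace ℝ (Fin N) → ℝ) (hu : ContDiffOn ℝ 3 u U)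
    (P : EuclideanSpace ℝ (Fin N) → ℝ)
    (hP : ∀ y, P y = (2 * (p - 1) / p) * ‖gradient u y‖ ^ p + (2 / (N : ℝ)) * u y)
    (x : EuclideanSpace ℝ (Fin N)) (hx : x ∈ U) (hg : gradient u x ≠ 0) :
    (hess P x).trace =
      2 * ((p - 1) * ‖gradient u x‖ ^ (p - 2) *
            ((p - 2) *
                (∑ i, ((hess u x).mulVec (fun j => gradient u x j / ‖gradient u x‖) i) ^ 2) +
              frobSq (hess u x) +
              (fun i => gradient u x i) ⬝ᵥ
                (fun i => gradient (fun y => (hess u y).trace) x i)) +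
          (hess u x).trace / (N : ℝ)) :=
  laplacian_P_function_general N p hp U hU u hu P hP x hx hg
end

section
/- (Non-negativity of the deficit integral I_p(u), Theorem 3.1(i), first part) Let N ≥ 2, p > 1, let Ω ⊆ ℝ^N be open, and let u : Ω → ℝ be of class C². Define f : Ω → ℝ by f(x) := |∇u(x)|^{p−2} ‖( I + (p−2) (∇u(x)/|∇u(x)|) ⊗ (∇u(x)/|∇u(x)|) ) D²u(x)‖² − (Δ_p u(x))² / ( N |∇u(x)|^{p−2} ) if ∇u(x) ≠ 0, and f(x) := 0 if ∇u(x) = 0. Then f(x) ≥ 0 for every x ∈ Ω, and consequently the integral I_p(u) := ∫_Ω f(x) dx (with respect to Lebesgue measure) satisfies I_p(u) ≥ 0. -/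
open Matrix Real MeasureTheory

/-- The divergence of a vector field: the trace of its Fréchet derivative. -/
noncomputable def diverg {N : ℕ} (W : EuclideanSpace ℝ (Fin N) → EuclideanSpace ℝ (Fin N))
    (x : EuclideanSpace ℝ (Fin N)) : ℝ :=
  ∑ i, fderiv ℝ W x (EuclideanSpace.single i 1) i

/-- The `p`-Laplacian `Δ_p u = div(|∇u|^{p-2} ∇u)`. -/
noncomputable def pLap {N : ℕ} (p : ℝ) (u : EuclideanSpace ℝ (Fin N) → ℝ)
    (x : EuclideanSpace ℝ (Fin N)) : ℝ :=
  diverg (fun y => ‖gradient u y‖ ^ (p - 2) • gradient u y) x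

/-!
Where `∇u(x) ≠ 0`, differentiating `|∇u|^{p-2} ∇u` gives `Δ_p u = |∇u|^{p-2} tr A` with
`A = (I + (p-2) ν ⊗ ν) D²u` and `ν = ∇u/|∇u|`. The integrand is therefore
`|∇u|^{p-2} (‖A‖² - (tr A)²/N)`, which is nonnegative because
`(tr A)² ≤ N ∑ᵢ Aᵢᵢ² ≤ N ‖A‖²` by Cauchy–Schwarz.
-/

section Calculus

variable {E F : Type*} [NormedAddCommGroup E] [NormedSpace ℝ E]
  [NormedAddCommGroup F] [InnerProductSpace ℝ F]

theorem hasFDerivAt_norm_rpow_of_ne_zero {z : F} (hz : z ≠ 0) (q : ℝ) :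
    HasFDerivAt (fun z : F ↦ ‖z‖ ^ q) ((q * ‖z‖ ^ (q - 2)) • innerSL ℝ z) z := by
  apply HasStrictFDerivAt.hasFDerivAt
  convert (hasStrictFDerivAt_norm_sq z).rpow_const (p := q / 2) (by simp [hz]) using 1
  · ext y; rw [← Real.rpow_natCast_mul (norm_nonneg _)]; norm_num; ring_nf
  · simp_rw [← Real.rpow_natCast_mul (norm_nonneg _), ← Nat.cast_smul_eq_nsmul ℝ, smul_smul]
    ring_nf

theorem HasFDerivAt.norm_rpow_smul {G : E → F} {G' : E →L[ℝ] F} {x : E}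
    (hG : HasFDerivAt G G' x) (hx : G x ≠ 0) (q : ℝ) :
    HasFDerivAt (fun y ↦ ‖G y‖ ^ q • G y)
      (‖G x‖ ^ q • G' + ((q * ‖G x‖ ^ (q - 2)) • (innerSL ℝ (G x)).comp G').smulRight (G x)) x :=
  ((hasFDerivAt_norm_rpow_of_ne_zero hx q).comp x hG).smul hG

theorem ContDiffAt.gradient [CompleteSpace F] {f : F → ℝ} {x : F} {m n : WithTop ℕ∞}
    (hf : ContDiffAt ℝ n f x) (hmn : m + 1 ≤ n) : ContDiffAt ℝ m (gradient f) x :=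
  (InnerProductSpace.toDual ℝ F).symm.contDiff.contDiffAt.comp x (hf.fderiv_right hmn)

end Calculus

theorem EuclideanSpace.gradient_apply {N : ℕ} (h : EuclideanSpace ℝ (Fin N) → ℝ)
    (x : EuclideanSpace ℝ (Fin N)) (i : Fin N) :
    gradient h x i = fderiv ℝ h x (EuclideanSpace.single i 1) := by
  rw [← toDual_gradient, InnerProductSpace.toDual_apply_apply, EuclideanSpace.inner_single_right]
  simp

theorem hess_apply_eq_fderiv_gradient {N : ℕ} {u : EuclideanSpace ℝ (Fin N) → ℝ}
    {x : EuclideanSpace ℝ (Fin N)} (hu : DifferentiableAt ℝ (gradient u) x) (i j : Fin N) :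
    hess u x i j = fderiv ℝ (gradient u) x (EuclideanSpace.single i 1) j := by
  rw [hess, EuclideanSpace.gradient_apply]
  exact congrArg (fun L : EuclideanSpace ℝ (Fin N) →L[ℝ] ℝ => L (EuclideanSpace.single i 1))
    ((EuclideanSpace.proj j).hasFDerivAt.comp x hu.hasFDerivAt).fderiv

theorem Matrix.trace_one_add_smul_vecMulVec_mul {n R : Type*} [Fintype n] [DecidableEq n]
    [CommRing R] (c : R) (v : n → R) (H : Matrix n n R) :
    trace ((1 + c • vecMulVec v v) * H) = trace H + c * (v ⬝ᵥ H *ᵥ v) := by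
  rw [add_mul, one_mul, trace_add, smul_mul, trace_smul, vecMulVec_mul, trace_vecMulVec,
    dotProduct_mulVec, dotProduct_comm, smul_eq_mul]

theorem Matrix.sq_trace_div_le_frobSq {n : ℕ} (A : Matrix (Fin n) (Fin n) ℝ) :
    trace A ^ 2 / n ≤ frobSq A := by
  rcases Nat.eq_zero_or_pos n with rfl | hn
  · simp [frobSq]
  rw [div_le_iff₀ (by exact_mod_cast hn), mul_comm]
  calc trace A ^ 2 ≤ n * ∑ i, A i i ^ 2 := by
        simpa [trace] using sq_sum_le_card_mul_sum_sq (s := Finset.univ) (f := fun i => A i i)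
    _ ≤ n * frobSq A := by
        refine mul_le_mul_of_nonneg_left (Finset.sum_le_sum fun i _ => ?_) n.cast_nonneg
        exact Finset.single_le_sum (f := fun j => A i j ^ 2) (fun j _ => sq_nonneg _)
          (Finset.mem_univ i)

theorem pLap_eq_rpow_norm_mul_trace (p : ℝ) {N : ℕ} {u : EuclideanSpace ℝ (Fin N) → ℝ}
    {x : EuclideanSpace ℝ (Fin N)} (hu : ContDiffAt ℝ 2 u x) (hx : gradient u x ≠ 0) :
    pLap p u x = ‖gradient u x‖ ^ (p - 2) *
      trace ((1 + (p - 2) • vecMulVec (fun i => gradient u x i / ‖gradient u x‖)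
        (fun i => gradient u x i / ‖gradient u x‖)) * hess u x) := by
  have hG : DifferentiableAt ℝ (gradient u) x :=
    (hu.gradient (by norm_num)).differentiableAt one_ne_zero
  have hW := hG.hasFDerivAt.norm_rpow_smul hx (p - 2)
  set g := gradient u x
  have hg : ‖g‖ ≠ 0 := norm_ne_zero_iff.2 hx
  have hquad : (fun i => g i / ‖g‖) ⬝ᵥ hess u x *ᵥ (fun i => g i / ‖g‖)
      = (∑ i, inner ℝ g (fderiv ℝ (gradient u) x (EuclideanSpace.single i 1)) * g i) / ‖g‖ ^ 2 := by
    simp only [dotProduct, mulVec, hess_apply_eq_fderiv_gradient hG, PiLp.inner_apply,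
      RCLike.inner_apply, conj_trivial, Finset.sum_div, Finset.mul_sum, Finset.sum_mul]
    refine Finset.sum_congr rfl fun i _ => Finset.sum_congr rfl fun k _ => ?_
    field_simp
  have hpow : ‖g‖ ^ (p - 2 - 2) = ‖g‖ ^ (p - 2) / ‖g‖ ^ 2 := by
    rw [Real.rpow_sub (norm_pos_iff.2 hx), Real.rpow_two]
  rw [pLap, diverg, hW.fderiv, trace_one_add_smul_vecMulVec_mul, hquad, hpow, trace]
  simp only [_root_.add_apply, _root_.smul_apply, ContinuousLinearMap.smulRight_apply,
    ContinuousLinearMap.comp_apply, innerSL_apply_apply, PiLp.add_apply, PiLp.smul_apply,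
    smul_eq_mul, diag, hess_apply_eq_fderiv_gradient hG, Finset.sum_add_distrib, mul_assoc,
    ← Finset.mul_sum]
  field_simp

theorem deficit_integral_nonneg_general (N : ℕ) (p : ℝ)
    (Ω : Set (EuclideanSpace ℝ (Fin N))) (hΩ : IsOpen Ω)
    (u : EuclideanSpace ℝ (Fin N) → ℝ) (hu : ContDiffOn ℝ 2 u Ω)
    (f : EuclideanSpace ℝ (Fin N) → ℝ)
    (hf0 : ∀ x, gradient u x = 0 → f x = 0)
    (hf1 : ∀ x, gradient u x ≠ 0 → f x =
      ‖gradient u x‖ ^ (p - 2) *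
          frobSq (((1 : Matrix (Fin N) (Fin N) ℝ) +
              (p - 2) • Matrix.vecMulVec (fun i => gradient u x i / ‖gradient u x‖)
                (fun i => gradient u x i / ‖gradient u x‖)) * hess u x) -
        (pLap p u x) ^ 2 / ((N : ℝ) * ‖gradient u x‖ ^ (p - 2))) :
    (∀ x ∈ Ω, 0 ≤ f x) ∧ 0 ≤ ∫ x in Ω, f x := by
  have hf_nonneg : ∀ x ∈ Ω, 0 ≤ f x := by
    intro x hx
    by_cases hg : gradient u x = 0
    · exact (hf0 x hg).ge
    rw [hf1 x hg, pLap_eq_rpow_norm_mul_trace p (hu.contDiffAt (hΩ.mem_nhds hx)) hg, sub_nonneg]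
    set r := ‖gradient u x‖ ^ (p - 2)
    set A := ((1 : Matrix (Fin N) (Fin N) ℝ) + (p - 2) • vecMulVec
      (fun i => gradient u x i / ‖gradient u x‖) (fun i => gradient u x i / ‖gradient u x‖)) *
        hess u x
    have hr : 0 < r := Real.rpow_pos_of_pos (norm_pos_iff.2 hg) _
    calc (r * trace A) ^ 2 / (N * r) = r * (trace A ^ 2 / N) := by
          field_simp
      _ ≤ r * frobSq A := mul_le_mul_of_nonneg_left (sq_trace_div_le_frobSq A) hr.le
  exact ⟨hf_nonneg, setIntegral_nonneg hΩ.measurableSet hf_nonneg⟩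

/-- **Non-negativity of the deficit integral `I_p(u)`** (Theorem 3.1(i), first part, of the
paper). Let `f` be the integrand of `I_p(u)`, i.e.
`f(x) = |∇u|^{p-2} ‖(I + (p-2)(∇u/|∇u|)⊗(∇u/|∇u|)) D²u‖² - (Δ_p u)²/(N |∇u|^{p-2})` at
non-critical points and `f(x) = 0` at critical points. Then `f ≥ 0` on `Ω` and hence
`I_p(u) = ∫_Ω f ≥ 0`. -/
theorem deficit_integral_nonneg (N : ℕ) (hN : 2 ≤ N) (p : ℝ) (hp : 1 < p)
    (Ω : Set (EuclideanSpace ℝ (Fin N))) (hΩ : IsOpen Ω)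
    (u : EuclideanSpace ℝ (Fin N) → ℝ) (hu : ContDiffOn ℝ 2 u Ω)
    (f : EuclideanSpace ℝ (Fin N) → ℝ)
    (hf0 : ∀ x, gradient u x = 0 → f x = 0)
    (hf1 : ∀ x, gradient u x ≠ 0 → f x =
      ‖gradient u x‖ ^ (p - 2) *
          frobSq (((1 : Matrix (Fin N) (Fin N) ℝ) +
              (p - 2) • Matrix.vecMulVec (fun i => gradient u x i / ‖gradient u x‖)
                (fun i => gradient u x i / ‖gradient u x‖)) * hess u x) -
        (pLap p u x) ^ 2 / ((N : ℝ) * ‖gradient u x‖ ^ (p - 2))) :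
    (∀ x ∈ Ω, 0 ≤ f x) ∧ 0 ≤ ∫ x in Ω, f x :=
  deficit_integral_nonneg_general N p Ω hΩ u hu f hf0 hf1
end

section
/- (Lemma 3.3, gluing radius in the annulus) Let N ≥ 2, p > 1, and 0 < R1 < R2. Define F1(ρ) := ∫_{R1}^{ρ} ( ρ^N/(N τ^{N−1}) − τ/N )^{1/(p−1)} dτ for ρ ∈ [R1, R2] and F2(ρ) := ∫_{ρ}^{R2} ( τ/N − ρ^N/(N τ^{N−1}) )^{1/(p−1)} dτ for ρ ∈ [0, R2]. Then there exists a unique R̄ ∈ (R1, R2) such that F1(R̄) = F2(R̄). -/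
open Real intervalIntegral

private theorem annulus_base_id (N : ℕ) (hN : 2 ≤ N) (ρ τ : ℝ) (hτ : 0 < τ) :
    ρ ^ N / ((N : ℝ) * τ ^ (N - 1)) - τ / (N : ℝ)
      = (ρ ^ N - τ ^ N) / ((N : ℝ) * τ ^ (N - 1)) := by
  have hN0 : (0:ℝ) < (N:ℝ) := by
    have : 0 < N := by omega
    exact_mod_cast this
  have hpow : τ ^ (N - 1) * τ = τ ^ N := by
    rw [← pow_succ]; congr 1; omega
  have hD : (0:ℝ) < (N:ℝ) * τ ^ (N - 1) := by positivity
  rw [sub_div]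
  congr 1
  rw [div_eq_div_iff hN0.ne' hD.ne']
  linear_combination ((N:ℝ)) * hpow

/-- **Gluing radius in the annulus** (Lemma 3.3 of the paper). For `N ≥ 2`, `p > 1` and
`0 < R1 < R2`, with `F1(ρ) = ∫_{R1}^{ρ} (ρ^N/(N τ^{N-1}) - τ/N)^{1/(p-1)} dτ` and
`F2(ρ) = ∫_{ρ}^{R2} (τ/N - ρ^N/(N τ^{N-1}))^{1/(p-1)} dτ`, there exists a unique
`R̄ ∈ (R1, R2)` such that `F1(R̄) = F2(R̄)`. -/
theorem annulus_gluing_radius (N : ℕ) (hN : 2 ≤ N) (p : ℝ) (hp : 1 < p)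
    (R1 R2 : ℝ) (hR1 : 0 < R1) (hR12 : R1 < R2)
    (F1 F2 : ℝ → ℝ)
    (hF1 : ∀ ρ ∈ Set.Icc R1 R2,
      F1 ρ = ∫ τ in R1..ρ, (ρ ^ N / ((N : ℝ) * τ ^ (N - 1)) - τ / (N : ℝ)) ^ ((1 : ℝ) / (p - 1)))
    (hF2 : ∀ ρ ∈ Set.Icc (0 : ℝ) R2,
      F2 ρ = ∫ τ in ρ..R2, (τ / (N : ℝ) - ρ ^ N / ((N : ℝ) * τ ^ (N - 1))) ^ ((1 : ℝ) / (p - 1))) :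
    ∃! R : ℝ, R ∈ Set.Ioo R1 R2 ∧ F1 R = F2 R := by
  have hp1 : (0:ℝ) < p - 1 := by linarith
  set q : ℝ := (1:ℝ)/(p-1) with hqdef
  have hq : 0 < q := by positivity
  have hN0 : (0:ℝ) < (N:ℝ) := by
    have : 0 < N := by omega
    exact_mod_cast this
  have hmpos : ∀ τ : ℝ, 0 < max R1 τ := fun τ => lt_of_lt_of_le hR1 (le_max_left _ _)
  set f : ℝ → ℝ → ℝ :=
    fun ρ τ => (ρ^N/((N:ℝ)*(max R1 τ)^(N-1)) - τ/(N:ℝ)) ^ q with hfdef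
  set g : ℝ → ℝ → ℝ :=
    fun ρ τ => (τ/(N:ℝ) - ρ^N/((N:ℝ)*(max R1 τ)^(N-1))) ^ q with hgdef
  have hrpow : Continuous fun x : ℝ => x ^ q := Real.continuous_rpow_const hq.le
  have hbcont : Continuous fun pr : ℝ×ℝ => pr.1^N/((N:ℝ)*(max R1 pr.2)^(N-1)) - pr.2/(N:ℝ) := by
    apply Continuous.sub
    · exact Continuous.div (by fun_prop) (by fun_prop)
        (fun x => (mul_pos hN0 (pow_pos (hmpos x.2) _)).ne')
    · exact continuous_snd.div_const _
  have hfcont : Continuous (Function.uncurry f) := hrpow.comp hbcont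
  have hgcont : Continuous (Function.uncurry g) := by
    have h : Function.uncurry g =
        (fun x : ℝ => x ^ q) ∘ (fun pr : ℝ×ℝ =>
          -(pr.1^N/((N:ℝ)*(max R1 pr.2)^(N-1)) - pr.2/(N:ℝ))) := by
      funext pr
      simp only [Function.uncurry, hgdef, Function.comp]
      ring_nf
    rw [h]; exact hrpow.comp hbcont.neg
  have hintf : ∀ ρ x y : ℝ, IntervalIntegrable (f ρ) MeasureTheory.volume x y :=
    fun ρ x y => (hfcont.comp (Continuous.prodMk_right ρ)).intervalIntegrable x y
  have hintg : ∀ ρ x y : ℝ, IntervalIntegrable (g ρ) MeasureTheory.volume x y :=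
    fun ρ x y => (hgcont.comp (Continuous.prodMk_right ρ)).intervalIntegrable x y
  set Φ1 : ℝ → ℝ := fun ρ => ∫ τ in R1..ρ, f ρ τ with hΦ1def
  set Φ2 : ℝ → ℝ := fun ρ => ∫ τ in ρ..R2, g ρ τ with hΦ2def
  have hΦ1c : Continuous Φ1 :=
    intervalIntegral.continuous_parametric_intervalIntegral_of_continuous hfcont continuous_id
  have hΦ2c : Continuous Φ2 := by
    have h : Continuous fun ρ => ∫ τ in R2..ρ, g ρ τ :=
      intervalIntegral.continuous_parametric_intervalIntegral_of_continuous hgcont continuous_id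
    have e : Φ2 = fun ρ => -∫ τ in R2..ρ, g ρ τ := by
      funext ρ
      simp only [hΦ2def]
      exact intervalIntegral.integral_symm R2 ρ
    rw [e]; exact h.neg
  -- equality with F1, F2 on the relevant intervals
  have hF1eq : ∀ ρ ∈ Set.Icc R1 R2, F1 ρ = Φ1 ρ := by
    intro ρ hρ
    rw [hF1 ρ hρ]
    simp only [hΦ1def]
    apply intervalIntegral.integral_congr
    intro τ hτ
    rw [Set.uIcc_of_le hρ.1] at hτ
    simp only [hfdef]
    rw [max_eq_right hτ.1]
  have hF2eq : ∀ ρ ∈ Set.Icc R1 R2, F2 ρ = Φ2 ρ := by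
    intro ρ hρ
    rw [hF2 ρ ⟨le_trans hR1.le hρ.1, hρ.2⟩]
    simp only [hΦ2def]
    apply intervalIntegral.integral_congr
    intro τ hτ
    rw [Set.uIcc_of_le hρ.2] at hτ
    simp only [hgdef]
    rw [max_eq_right (le_trans hρ.1 hτ.1)]
  -- base identities
  have hDpos : ∀ τ:ℝ, R1 ≤ τ → (0:ℝ) < (N:ℝ)*τ^(N-1) :=
    fun τ hτ => mul_pos hN0 (pow_pos (lt_of_lt_of_le hR1 hτ) _)
  have hbase : ∀ ρ τ : ℝ, R1 ≤ τ →
      ρ^N/((N:ℝ)*(max R1 τ)^(N-1)) - τ/(N:ℝ) = (ρ^N - τ^N)/((N:ℝ)*τ^(N-1)) := by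
    intro ρ τ hτ
    rw [max_eq_right hτ]
    exact annulus_base_id N hN ρ τ (lt_of_lt_of_le hR1 hτ)
  have hcase : ∀ ρ τ : ℝ, R1 ≤ τ →
      τ/(N:ℝ) - ρ^N/((N:ℝ)*(max R1 τ)^(N-1)) = (τ^N - ρ^N)/((N:ℝ)*τ^(N-1)) := by
    intro ρ τ hτ
    have h := hbase ρ τ hτ
    have e : (τ^N - ρ^N)/((N:ℝ)*τ^(N-1)) = -((ρ^N - τ^N)/((N:ℝ)*τ^(N-1))) := by ring
    rw [e, ← h]; ring
  -- monotone facts about powers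
  have hpowle : ∀ x y : ℝ, 0 ≤ x → x ≤ y → x ^ N ≤ y ^ N :=
    fun x y hx hxy => pow_le_pow_left₀ hx hxy N
  have hpowlt : ∀ x y : ℝ, 0 ≤ x → x < y → x ^ N < y ^ N :=
    fun x y hx hxy => pow_lt_pow_left₀ hxy hx (by omega)
  -- strict monotonicity of Φ1 - Φ2
  have hmono : StrictMonoOn (fun ρ => Φ1 ρ - Φ2 ρ) (Set.Icc R1 R2) := by
    intro a ha b hb hab
    have h1 : Φ1 a < Φ1 b := by
      have hsplit : (∫ τ in R1..a, f b τ) + (∫ τ in a..b, f b τ) = Φ1 b :=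
        integral_add_adjacent_intervals (hintf b R1 a) (hintf b a b)
      have hle : Φ1 a ≤ ∫ τ in R1..a, f b τ := by
        apply intervalIntegral.integral_mono_on ha.1 (hintf a R1 a) (hintf b R1 a)
        intro τ hτ
        have hτ1 : R1 ≤ τ := hτ.1
        have hτ0 : 0 ≤ τ := le_trans hR1.le hτ1
        simp only [hfdef]
        apply Real.rpow_le_rpow
        · rw [hbase a τ hτ1]
          exact div_nonneg (sub_nonneg.2 (hpowle τ a hτ0 hτ.2)) (hDpos τ hτ1).le
        · rw [hbase a τ hτ1, hbase b τ hτ1]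
          exact (div_le_div_iff_of_pos_right (hDpos τ hτ1)).2
            (by linarith [hpowle a b (le_trans hR1.le ha.1) hab.le])
        · exact hq.le
      have hpos : 0 < ∫ τ in a..b, f b τ := by
        apply intervalIntegral.intervalIntegral_pos_of_pos_on (hintf b a b) _ hab
        intro τ hτ
        have hτ1 : R1 ≤ τ := le_trans ha.1 hτ.1.le
        simp only [hfdef]
        apply Real.rpow_pos_of_pos
        rw [hbase b τ hτ1]
        exact div_pos (sub_pos.2 (hpowlt τ b (le_trans hR1.le hτ1) hτ.2)) (hDpos τ hτ1)
      linarith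
    have h2 : Φ2 b ≤ Φ2 a := by
      have hsplit : (∫ τ in a..b, g a τ) + (∫ τ in b..R2, g a τ) = Φ2 a :=
        integral_add_adjacent_intervals (hintg a a b) (hintg a b R2)
      have h0 : 0 ≤ ∫ τ in a..b, g a τ := by
        apply intervalIntegral.integral_nonneg hab.le
        intro τ hτ
        have hτ1 : R1 ≤ τ := le_trans ha.1 hτ.1
        simp only [hgdef]
        apply Real.rpow_nonneg
        rw [hcase a τ hτ1]
        exact div_nonneg (sub_nonneg.2 (hpowle a τ (le_trans hR1.le ha.1) hτ.1)) (hDpos τ hτ1).le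
      have hle : Φ2 b ≤ ∫ τ in b..R2, g a τ := by
        apply intervalIntegral.integral_mono_on hb.2 (hintg b b R2) (hintg a b R2)
        intro τ hτ
        have hτ1 : R1 ≤ τ := le_trans hb.1 hτ.1
        simp only [hgdef]
        apply Real.rpow_le_rpow
        · rw [hcase b τ hτ1]
          exact div_nonneg (sub_nonneg.2 (hpowle b τ (le_trans hR1.le hb.1) hτ.1)) (hDpos τ hτ1).le
        · rw [hcase a τ hτ1, hcase b τ hτ1]
          exact (div_le_div_iff_of_pos_right (hDpos τ hτ1)).2
            (by linarith [hpowle a b (le_trans hR1.le ha.1) hab.le])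
        · exact hq.le
      linarith
    simp only []
    linarith
  -- endpoint values
  have hG1 : Φ1 R1 - Φ2 R1 < 0 := by
    have e1 : Φ1 R1 = 0 := by
      simp only [hΦ1def]; exact intervalIntegral.integral_same
    have e2 : 0 < Φ2 R1 := by
      simp only [hΦ2def]
      apply intervalIntegral.intervalIntegral_pos_of_pos_on (hintg R1 R1 R2) _ hR12
      intro τ hτ
      have hτ1 : R1 ≤ τ := hτ.1.le
      simp only [hgdef]
      apply Real.rpow_pos_of_pos
      rw [hcase R1 τ hτ1]
      exact div_pos (sub_pos.2 (hpowlt R1 τ hR1.le hτ.1)) (hDpos τ hτ1)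
    linarith
  have hG2 : 0 < Φ1 R2 - Φ2 R2 := by
    have e2 : Φ2 R2 = 0 := by
      simp only [hΦ2def]; exact intervalIntegral.integral_same
    have e1 : 0 < Φ1 R2 := by
      simp only [hΦ1def]
      apply intervalIntegral.intervalIntegral_pos_of_pos_on (hintf R2 R1 R2) _ hR12
      intro τ hτ
      have hτ1 : R1 ≤ τ := hτ.1.le
      simp only [hfdef]
      apply Real.rpow_pos_of_pos
      rw [hbase R2 τ hτ1]
      exact div_pos (sub_pos.2 (hpowlt τ R2 (le_trans hR1.le hτ1) hτ.2)) (hDpos τ hτ1)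
    linarith
  -- existence via IVT
  have hcont : ContinuousOn (fun ρ => Φ1 ρ - Φ2 ρ) (Set.Icc R1 R2) :=
    (hΦ1c.sub hΦ2c).continuousOn
  have hmem : (0:ℝ) ∈ Set.Ioo (Φ1 R1 - Φ2 R1) (Φ1 R2 - Φ2 R2) := ⟨hG1, hG2⟩
  obtain ⟨R, hRmem, hR0⟩ := intermediate_value_Ioo hR12.le hcont hmem
  have hRI : R ∈ Set.Icc R1 R2 := Set.Ioo_subset_Icc_self hRmem
  refine ⟨R, ⟨hRmem, ?_⟩, ?_⟩
  · have e1 := hF1eq R hRI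
    have e2 := hF2eq R hRI
    have : Φ1 R - Φ2 R = 0 := hR0
    linarith
  · rintro y ⟨hy, hyeq⟩
    have hyI : y ∈ Set.Icc R1 R2 := Set.Ioo_subset_Icc_self hy
    have hy0 : Φ1 y - Φ2 y = 0 := by
      have e1 := hF1eq y hyI
      have e2 := hF2eq y hyI
      linarith
    exact hmono.injOn hyI hRI (by show Φ1 y - Φ2 y = Φ1 R - Φ2 R; rw [hy0]; exact hR0.symm)
end

section
/- (Verification of the radial p-Laplace ODE in the annulus) Let N ≥ 2, p > 1, and ρ > 0. Define φ(r) := ρ^N/(N r^{N−1}) − r/N and g(r) := φ(r)^{1/(p−1)} for r ∈ (0, ρ). Then for every r ∈ (0, ρ), φ(r) > 0, g is differentiable at r, and g(r)^{p−2} ( (p−1) g′(r) + ((N−1)/r) g(r) ) = −1. (This verifies that the function u_A with u_A′ = g solves the radial form of the equation −Δ_p u = 1, namely |u′|^{p−2}[(p−1)u″ + ((N−1)/r) u′] = −1, on the inner part (R1, R̄) of the annulus.) -/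
open Real

/-- **Verification of the radial `p`-Laplace ODE in the annulus** (from the proof of Lemma 3.3
of the paper). For `N ≥ 2`, `p > 1`, `ρ > 0`, `φ(r) = ρ^N/(N r^{N-1}) - r/N` and
`g(r) = φ(r)^{1/(p-1)}`, one has for every `r ∈ (0, ρ)`: `φ(r) > 0`, `g` is differentiable at
`r`, and `g(r)^{p-2} ((p-1) g'(r) + ((N-1)/r) g(r)) = -1`, i.e. the radial form of
`-Δ_p u = 1` holds on the inner part of the annulus. -/
theorem radial_p_laplace_ode (N : ℕ) (hN : 2 ≤ N) (p : ℝ) (hp : 1 < p) (ρ : ℝ) (hρ : 0 < ρ)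
    (φ g : ℝ → ℝ)
    (hφ : ∀ r, φ r = ρ ^ N / ((N : ℝ) * r ^ (N - 1)) - r / (N : ℝ))
    (hg : ∀ r, g r = φ r ^ ((1 : ℝ) / (p - 1))) :
    ∀ r ∈ Set.Ioo (0 : ℝ) ρ,
      0 < φ r ∧ DifferentiableAt ℝ g r ∧
        g r ^ (p - 2) * ((p - 1) * deriv g r + (((N : ℝ) - 1) / r) * g r) = -1 := by
  obtain ⟨k, rfl⟩ : ∃ k, N = k + 2 := ⟨N - 2, by omega⟩
  intro r hr
  obtain ⟨hr0, hrρ⟩ := hr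
  have hsub : k + 2 - 1 = k + 1 := rfl
  have hNR : ((k + 2 : ℕ) : ℝ) = (k : ℝ) + 2 := by push_cast; ring
  have hNpos : (0 : ℝ) < (k : ℝ) + 2 := by positivity
  have hrne : r ≠ 0 := hr0.ne'
  have hrk : (0 : ℝ) < r ^ (k + 1) := pow_pos hr0 _
  -- positivity of φ
  have hφpos : 0 < φ r := by
    rw [hφ, hsub, hNR, sub_pos, div_lt_div_iff₀ hNpos (by positivity)]
    have hpow : r ^ (k + 2) < ρ ^ (k + 2) := pow_lt_pow_left₀ hrρ hr0.le (by omega)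
    calc r * (((k:ℝ)+2) * r ^ (k+1)) = ((k:ℝ)+2) * r ^ (k+2) := by ring
    _ < ((k:ℝ)+2) * ρ ^ (k+2) := by nlinarith
    _ = ρ ^ (k+2) * ((k:ℝ)+2) := by ring
  -- derivative of φ
  set C : ℝ := ρ ^ (k + 2) / ((k : ℝ) + 2) with hC
  have hφeq : φ = fun x => C * (x ^ (k + 1))⁻¹ - x / ((k : ℝ) + 2) := by
    funext x
    rw [hφ, hsub, hNR, hC]
    rcases eq_or_ne x 0 with h | h
    · simp [h]
    · field_simp
  set D : ℝ := C * (-(((k : ℝ) + 1) * r ^ k) / (r ^ (k + 1)) ^ 2) - 1 / ((k : ℝ) + 2) with hD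
  have hφd : HasDerivAt φ D r := by
    rw [hφeq, hD]
    have h1 : HasDerivAt (fun x : ℝ => x ^ (k + 1)) (((k : ℝ) + 1) * r ^ k) r := by
      simpa using hasDerivAt_pow (k + 1) r
    have h2 := (h1.inv hrk.ne').const_mul C
    have h3 : HasDerivAt (fun x : ℝ => x / ((k : ℝ) + 2)) (1 / ((k : ℝ) + 2)) r := by
      simpa using (hasDerivAt_id r).div_const ((k : ℝ) + 2)
    exact h2.sub h3
  -- derivative of g
  set c : ℝ := 1 / (p - 1) with hc
  have hp1 : p - 1 ≠ 0 := by linarith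
  have hgeq : g = fun x => φ x ^ c := funext fun x => hg x
  have hgd : HasDerivAt g (D * c * φ r ^ (c - 1)) r := by
    rw [hgeq]
    exact hφd.rpow_const (Or.inl hφpos.ne')
  refine ⟨hφpos, hgd.differentiableAt, ?_⟩
  rw [hgd.deriv, hg r]
  set A := φ r with hA
  have hkey : D + (((k : ℝ) + 1) / r) * A = -1 := by
    rw [hD, hA, hφ, hsub, hNR, hC]
    field_simp
    ring
  have e1 : A ^ (c * (p - 2)) * A ^ (c - 1) = 1 := by
    rw [← Real.rpow_add hφpos, show c * (p - 2) + (c - 1) = 0 by rw [hc]; field_simp; ring,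
      Real.rpow_zero]
  have e2 : A ^ (c * (p - 2)) * A ^ c = A := by
    rw [← Real.rpow_add hφpos, show c * (p - 2) + c = 1 by rw [hc]; field_simp; ring,
      Real.rpow_one]
  have hpc : (p - 1) * c = 1 := by rw [hc]; field_simp
  have hN1 : ((k + 2 : ℕ) : ℝ) - 1 = (k : ℝ) + 1 := by push_cast; ring
  have hgp : (A ^ c) ^ (p - 2) = A ^ (c * (p - 2)) := (Real.rpow_mul hφpos.le _ _).symm
  rw [hN1, hgp]
  calc A ^ (c * (p - 2)) * ((p - 1) * (D * c * A ^ (c - 1)) + ((k : ℝ) + 1) / r * A ^ c)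
      = (p - 1) * c * D * (A ^ (c * (p - 2)) * A ^ (c - 1))
        + ((k : ℝ) + 1) / r * (A ^ (c * (p - 2)) * A ^ c) := by ring
    _ = D + ((k : ℝ) + 1) / r * A := by rw [e1, e2, hpc]; ring
    _ = -1 := hkey
end
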